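/- Let Σ = A C Aᵀ + Γ with A the assignment matrix of a partition G with minimal group size m ≥ 1, C symmetric PSD with Δ(C) > 0, and Γ diagonal constant within groups. Then B* = argmax_{B ∈ 𝒞} ⟨Σ − Γ, B⟩, and the maximizer is unique. -/

import Mathlib

/-!
For a symmetric matrix `M` with unit row sums,
`⟨C_g, M⟩ = ∑ₐ C_{g a, g a} - ½ ∑ₐ,ᵦ (C_{g a, g a} + C_{g b, g b} - 2 C_{g a, g b}) M_{ab}`,
where `C_g a b = C (g a) (g b)`. The weights in the penalty vanish inside a group and are positive
across groups (`Δ(C) > 0`), so over `𝒞` the objective is maximal exactly at the members supported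
on the diagonal blocks. `B*` is one of them, and the only one: `B* = Aᵀ diag(1/nⱼ) A` is the
orthogonal projection onto the span of the group indicators, a block-supported `B ∈ 𝒞` fixes that
span, so `B - B* = (1 - B*) B (1 - B*)` is positive semidefinite with trace `K - K = 0`.
-/

open Finset

/-- The normalized partnership matrix of the partition given by assignment `g`. -/
noncomputable def Bstar (p K : ℕ) (g : Fin p → Fin K) : Matrix (Fin p) (Fin p) ℝ :=
  fun a b => if g a = g b then ((Finset.univ.filter (fun c => g c = g a)).card : ℝ)⁻¹ else 0

/-- The convex set 𝒞. -/
def memC (p K : ℕ) (B : Matrix (Fin p) (Fin p) ℝ) : Prop :=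
  B.PosSemidef ∧ (∀ a b, 0 ≤ B a b) ∧ (∀ a, ∑ b, B a b = 1) ∧ B.trace = (K : ℝ)

open Matrix
open scoped ComplexOrder

namespace Matrix

variable {n : Type*} [Fintype n]

theorem PosSemidef.eq_of_mul_eq_of_trace_eq {𝕜 : Type*} [RCLike 𝕜] {B P : Matrix n n 𝕜}
    (hB : B.PosSemidef) (hP : P.IsHermitian) (hPP : P * P = P) (hBP : B * P = P)
    (htr : B.trace = P.trace) : B = P := by
  classical
  have hPB : P * B = P := by
    simpa only [conjTranspose_mul, hB.isHermitian.eq, hP.eq] using congrArg (·ᴴ) hBP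
  have hsub : (1 - P)ᴴ * B * (1 - P) = B - P := by
    simp only [conjTranspose_sub, conjTranspose_one, hP.eq, sub_mul, mul_sub, one_mul, mul_one,
      hPB, hBP, hPP]
    abel
  have hpsd : (B - P).PosSemidef := hsub ▸ hB.conjTranspose_mul_mul_same _
  rw [← sub_eq_zero, ← hpsd.trace_eq_zero_iff, trace_sub, htr, sub_self]

theorem sum_sum_mul_eq_sum_sub_half (c : n → n → ℝ) {M : Matrix n n ℝ} (hM : M.IsSymm)
    (hrow : ∀ a, ∑ b, M a b = 1) :
    ∑ a, ∑ b, c a b * M a b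
      = ∑ a, c a a - (∑ a, ∑ b, (c a a + c b b - 2 * c a b) * M a b) / 2 := by
  have hcol : ∀ b, ∑ a, M a b = 1 := fun b => by
    simpa only [← hM.apply b] using hrow b
  have hleft : ∑ a, ∑ b, c a a * M a b = ∑ a, c a a := by
    simp only [← mul_sum, hrow, mul_one]
  have hright : ∑ a, ∑ b, c b b * M a b = ∑ b, c b b := by
    rw [sum_comm]; simp only [← mul_sum, hcol, mul_one]
  have hsplit : ∑ a, ∑ b, (c a a + c b b - 2 * c a b) * M a b
      = ∑ a, ∑ b, c a a * M a b + ∑ a, ∑ b, c b b * M a b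
        - 2 * ∑ a, ∑ b, c a b * M a b := by
    simp only [add_mul, sub_mul, mul_assoc, sum_add_distrib, sum_sub_distrib, ← mul_sum]
  rw [hsplit, hleft, hright]
  ring

end Matrix

theorem sum_sum_mul_pos {ι : Type*} [Fintype ι] {w M : ι → ι → ℝ} (hw : ∀ a b, 0 ≤ w a b)
    (hM : ∀ a b, 0 ≤ M a b) {a b : ι} (hwab : 0 < w a b) (hMab : M a b ≠ 0) :
    0 < ∑ a, ∑ b, w a b * M a b :=
  sum_pos' (fun a _ => sum_nonneg fun b _ => mul_nonneg (hw a b) (hM a b))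
    ⟨a, mem_univ a, sum_pos' (fun b _ => mul_nonneg (hw a b) (hM a b))
      ⟨b, mem_univ b, mul_pos hwab ((hM a b).lt_of_ne' hMab)⟩⟩

section Assignment

variable {ι κ : Type*} (R : Type*) [Fintype ι] [DecidableEq κ] [Semiring R] (g : ι → κ)

def assignMatrix : Matrix κ ι R :=
  Matrix.of fun j a => if g a = j then 1 else 0

theorem assignMatrix_mul_transpose :
    assignMatrix R g * (assignMatrix R g)ᵀ = diagonal fun j => (#{a | g a = j} : R) := by
  ext j k
  simp only [Matrix.mul_apply, transpose_apply, assignMatrix, of_apply, mul_ite, mul_one,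
    mul_zero, diagonal_apply]
  split_ifs with hjk
  · subst hjk
    simp only [← ite_and, and_self, sum_boole]
  · exact sum_eq_zero fun a _ => by split_ifs with h1 h2 <;> simp_all

variable {R} in
theorem mul_assignMatrix_transpose {B : Matrix ι ι R} (hrow : ∀ a, ∑ b, B a b = 1)
    (hblock : ∀ a b, g a ≠ g b → B a b = 0) :
    B * (assignMatrix R g)ᵀ = (assignMatrix R g)ᵀ := by
  ext a j
  simp only [Matrix.mul_apply, transpose_apply, assignMatrix, of_apply, mul_ite, mul_one,
    mul_zero]
  split_ifs with h
  · rw [← hrow a, ← sum_filter]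
    refine sum_subset (subset_univ _) fun b _ hb => hblock a b ?_
    simp_all [eq_comm]
  · exact sum_eq_zero fun b _ => by split_ifs with hb <;> [exact hblock a b (by rwa [hb]); rfl]

end Assignment

theorem card_filter_eq_ne_zero {ι κ : Type*} [Fintype ι] [DecidableEq κ] {g : ι → κ}
    (hg : Function.Surjective g) (j : κ) : #{a | g a = j} ≠ 0 := by
  obtain ⟨a, rfl⟩ := hg j
  exact card_ne_zero_of_mem (mem_filter.mpr ⟨mem_univ a, rfl⟩)

section Bstar

variable {p K : ℕ} (g : Fin p → Fin K)

theorem Bstar_eq_transpose_mul_diagonal_mul :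
    Bstar p K g
      = (assignMatrix ℝ g)ᵀ * diagonal (fun j => (#{a | g a = j} : ℝ)⁻¹) * assignMatrix ℝ g := by
  ext a b
  simp only [Bstar, assignMatrix, Matrix.mul_apply, transpose_apply, of_apply, diagonal_apply,
    mul_ite, ite_mul, one_mul, zero_mul, mul_zero, mul_one, sum_ite_eq, sum_ite_eq', mem_univ,
    ↓reduceIte]
  split_ifs <;> simp_all

theorem Bstar_posSemidef : (Bstar p K g).PosSemidef := by
  have hD : (diagonal fun j => (#{a | g a = j} : ℝ)⁻¹).PosSemidef :=
    .diagonal fun j => by positivity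
  simpa only [Bstar_eq_transpose_mul_diagonal_mul, conjTranspose_eq_transpose_of_trivial]
    using hD.conjTranspose_mul_mul_same (assignMatrix ℝ g)

theorem Bstar_mul_self (hg : Function.Surjective g) : Bstar p K g * Bstar p K g = Bstar p K g := by
  simp only [Bstar_eq_transpose_mul_diagonal_mul, Matrix.mul_assoc]
  set D := diagonal fun j => (#{a | g a = j} : ℝ)⁻¹
  have hD : D * (diagonal (fun j => (#{a | g a = j} : ℝ)) * D) = D := by
    simp [D, diagonal_mul_diagonal, Nat.cast_ne_zero.mpr (card_filter_eq_ne_zero hg _)]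
  rw [← Matrix.mul_assoc (assignMatrix ℝ g), assignMatrix_mul_transpose,
    ← Matrix.mul_assoc (diagonal _) D, ← Matrix.mul_assoc D, hD]

theorem trace_Bstar (hg : Function.Surjective g) : (Bstar p K g).trace = K := by
  rw [Bstar_eq_transpose_mul_diagonal_mul, trace_mul_comm, ← Matrix.mul_assoc,
    assignMatrix_mul_transpose, diagonal_mul_diagonal, trace_diagonal]
  simp [Nat.cast_ne_zero.mpr (card_filter_eq_ne_zero hg _)]

theorem sum_Bstar_apply (hg : Function.Surjective g) (a : Fin p) : ∑ b, Bstar p K g a b = 1 := by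
  simp only [Bstar, sum_ite, sum_const_zero, add_zero, sum_const, nsmul_eq_mul]
  simp_rw [eq_comm (a := g a)]
  exact mul_inv_cancel₀ (Nat.cast_ne_zero.mpr (card_filter_eq_ne_zero hg _))

theorem Bstar_nonneg (a b : Fin p) : 0 ≤ Bstar p K g a b := by
  unfold Bstar; split_ifs <;> positivity

theorem memC_Bstar (hg : Function.Surjective g) : memC p K (Bstar p K g) :=
  ⟨Bstar_posSemidef g, Bstar_nonneg g, sum_Bstar_apply g hg, trace_Bstar g hg⟩

theorem Bstar_apply_of_ne {a b : Fin p} (h : g a ≠ g b) : Bstar p K g a b = 0 := if_neg h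

theorem sum_sum_mul_Bstar_eq_zero {w : Fin p → Fin p → ℝ} (hw : ∀ a b, g a = g b → w a b = 0) :
    ∑ a, ∑ b, w a b * Bstar p K g a b = 0 :=
  sum_eq_zero fun a _ => sum_eq_zero fun b _ => by
    by_cases h : g a = g b
    · rw [hw a b h, zero_mul]
    · rw [Bstar_apply_of_ne g h, mul_zero]

theorem eq_Bstar_of_memC (hg : Function.Surjective g) {B : Matrix (Fin p) (Fin p) ℝ}
    (hB : memC p K B) (hblock : ∀ a b, g a ≠ g b → B a b = 0) : B = Bstar p K g := by
  refine hB.1.eq_of_mul_eq_of_trace_eq (Bstar_posSemidef g).isHermitian (Bstar_mul_self g hg) ?_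
    (by rw [hB.2.2.2, trace_Bstar g hg])
  rw [Bstar_eq_transpose_mul_diagonal_mul, ← Matrix.mul_assoc, ← Matrix.mul_assoc,
    mul_assignMatrix_transpose g hB.2.2.1 hblock]

end Bstar

theorem stmt_7_general (p K : ℕ) (g : Fin p → Fin K) (hg : Function.Surjective g)
    (C : Matrix (Fin K) (Fin K) ℝ)
    (γ : Fin K → ℝ)
    (S : Matrix (Fin p) (Fin p) ℝ)
    (hS : ∀ a b, S a b = C (g a) (g b) + (Matrix.diagonal (fun c => γ (g c))) a b)
    (hΔ : ∀ j k : Fin K, j ≠ k → 0 < C j j + C k k - 2 * C j k) :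
    memC p K (Bstar p K g) ∧
    ∀ B : Matrix (Fin p) (Fin p) ℝ, memC p K B → B ≠ Bstar p K g →
      ∑ a, ∑ b, (S a b - (Matrix.diagonal (fun c => γ (g c))) a b) * B a b
        < ∑ a, ∑ b, (S a b - (Matrix.diagonal (fun c => γ (g c))) a b)
            * Bstar p K g a b := by
  refine ⟨memC_Bstar g hg, fun B hB hne => ?_⟩
  set w : Fin p → Fin p → ℝ := fun a b => C (g a) (g a) + C (g b) (g b) - 2 * C (g a) (g b)
  have hobj (M : Matrix (Fin p) (Fin p) ℝ) (hM : M.IsSymm) (hrow : ∀ a, ∑ b, M a b = 1) :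
      ∑ a, ∑ b, (S a b - diagonal (fun c => γ (g c)) a b) * M a b
        = ∑ a, C (g a) (g a) - (∑ a, ∑ b, w a b * M a b) / 2 := by
    simp only [hS, add_sub_cancel_right]
    exact sum_sum_mul_eq_sum_sub_half (fun a b => C (g a) (g b)) hM hrow
  have hw_same (a b : Fin p) (h : g a = g b) : w a b = 0 := by simp only [w, h]; ring
  have hw_nonneg (a b : Fin p) : 0 ≤ w a b := by
    by_cases h : g a = g b
    · exact (hw_same a b h).ge
    · exact (hΔ _ _ h).le
  obtain ⟨a, b, hab, hBab⟩ : ∃ a b, g a ≠ g b ∧ B a b ≠ 0 := by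
    by_contra! h
    exact hne (eq_Bstar_of_memC g hg hB h)
  have hpen_B : 0 < ∑ a, ∑ b, w a b * B a b :=
    sum_sum_mul_pos hw_nonneg hB.2.1 (hΔ _ _ hab) hBab
  rw [hobj B (isHermitian_iff_isSymm.mp hB.1.isHermitian) hB.2.2.1,
    hobj _ (isHermitian_iff_isSymm.mp (Bstar_posSemidef g).isHermitian) (sum_Bstar_apply g hg),
    sum_sum_mul_Bstar_eq_zero g hw_same]
  linarith

/-- if Σ = A C Aᵀ + Γ with C PSD, Δ(C) > 0, and Γ diagonal constant
within groups, then B* is the unique maximizer of B ↦ ⟨Σ − Γ, B⟩ over 𝒞. -/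
theorem stmt_7 (p K : ℕ) (g : Fin p → Fin K) (hg : Function.Surjective g)
    (C : Matrix (Fin K) (Fin K) ℝ) (hC : C.PosSemidef)
    (γ : Fin K → ℝ)
    (S : Matrix (Fin p) (Fin p) ℝ)
    (hS : ∀ a b, S a b = C (g a) (g b) + (Matrix.diagonal (fun c => γ (g c))) a b)
    (hΔ : ∀ j k : Fin K, j ≠ k → 0 < C j j + C k k - 2 * C j k) :
    memC p K (Bstar p K g) ∧
    ∀ B : Matrix (Fin p) (Fin p) ℝ, memC p K B → B ≠ Bstar p K g →
      ∑ a, ∑ b, (S a b - (Matrix.diagonal (fun c => γ (g c))) a b) * B a b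
        < ∑ a, ∑ b, (S a b - (Matrix.diagonal (fun c => γ (g c))) a b)
            * Bstar p K g a b :=
  stmt_7_general p K g hg C γ S hS hΔ
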